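/- Let D be a triangulated category with a split-generator G, let T be an exact autoequivalence of D, and let E be an object of D with E ≇ 0 and T E ≅ E. Let t ∈ ℝ and assume δ_t(G,E) > 0 (this is automatic for t = 0, since δ_0(G,E) ≥ 1 whenever E ≇ 0). Then G ⊕ E is a split-generator of D and liminf_{n→∞} (1/n)·log δ_t(G, Tⁿ(G ⊕ E)) ≥ 0. (This is the content of Theorem 1.7(2): if Ker S R ≠ 0 for a spherical functor S, then the twist T_S fixes a nonzero object and h_t(T_S) ≥ 0.) -/

import Mathlib

/-!
Since `T E ≅ E` and `T` is additive, `Tⁿ (G ⊕ E) ≅ Tⁿ G ⊕ E`, so every cone decomposition of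
`Tⁿ (G ⊕ E) ⊕ F'` by shifts of `G` is also one of `E ⊕ (Tⁿ G ⊕ F')`. Hence
`δ_t(G, Tⁿ (G ⊕ E)) ≥ δ_t(G, E) > 0` for all `n`, and `(1/n) log` of a sequence bounded below by a
positive constant has nonnegative `liminf`.
-/

open CategoryTheory CategoryTheory.Limits CategoryTheory.Pretriangulated Filter
open scoped ENNReal

universe v₁ v₂ u₁ u₂

variable {D : Type u₁} [Category.{v₁} D] [Preadditive D] [HasZeroObject D]
  [HasShift D ℤ] [∀ n : ℤ, (shiftFunctor D n).Additive] [Pretriangulated D]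

/-- An object `F` admits a cone decomposition with the given list of components. -/
inductive ConeDecomp : D → List D → Prop
  | nil {F : D} (h : IsZero F) : ConeDecomp F []
  | step {X : D} (F : D) {l : List D} (A : D) (hX : ConeDecomp X l)
      (f : X ⟶ F) (g : F ⟶ A) (h : A ⟶ X⟦(1 : ℤ)⟧)
      (ht : Triangle.mk f g h ∈ distTriang D) : ConeDecomp F (l ++ [A])

open scoped Classical in
/-- The categorical complexity `δ_t(E,F)`. -/
noncomputable def catDelta [HasBinaryBiproducts D] (t : ℝ) (E F : D) : ℝ≥0∞ :=
  if IsZero F then 0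
  else sInf {x : ℝ≥0∞ | ∃ (ns : List ℤ) (F' : D),
      ns ≠ [] ∧ ConeDecomp (F ⊞ F') (ns.map fun n => E⟦n⟧) ∧
      x = (ns.map fun n => ENNReal.ofReal (Real.exp ((n : ℝ) * t))).sum}

/-- Objects split-generated by `G`. -/
inductive SplitGen (G : D) : D → Prop
  | self : SplitGen G G
  | zero {X : D} (h : IsZero X) : SplitGen G X
  | ofIso {X Y : D} (e : X ≅ Y) (h : SplitGen G X) : SplitGen G Y
  | shift {X : D} (n : ℤ) (h : SplitGen G X) : SplitGen G (X⟦n⟧)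
  | cone₂ {X Y Z : D} (f : X ⟶ Y) (g : Y ⟶ Z) (h : Z ⟶ X⟦(1 : ℤ)⟧)
      (ht : Triangle.mk f g h ∈ distTriang D) (hX : SplitGen G X) (hZ : SplitGen G Z) :
      SplitGen G Y
  | summand {X Y : D} (s : X ⟶ Y) (p : Y ⟶ X) (hsp : s ≫ p = 𝟙 X)
      (h : SplitGen G Y) : SplitGen G X

/-- `G` is a split-generator. -/
def IsSplitGenerator (G : D) : Prop := ∀ X : D, SplitGen G X

lemma SplitGen.trans {H G X : D} (hG : SplitGen H G) (h : SplitGen G X) : SplitGen H X := by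
  induction h with
  | self => exact hG
  | zero h => exact .zero h
  | ofIso e _ ih => exact .ofIso e ih
  | shift n _ ih => exact .shift n ih
  | cone₂ f g hh ht _ _ ihX ihZ => exact .cone₂ f g hh ht ihX ihZ
  | summand s p hsp _ ih => exact .summand s p hsp ih

lemma IsSplitGenerator.biprod [HasBinaryBiproducts D] {G : D} (hG : IsSplitGenerator G) (E : D) :
    IsSplitGenerator (G ⊞ E) := fun X =>
  (SplitGen.summand biprod.inl biprod.fst biprod.inl_fst .self).trans (hG X)

lemma ConeDecomp.of_iso {F F' : D} (e : F ≅ F') {l : List D} (h : ConeDecomp F l) :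
    ConeDecomp F' l := by
  cases h with
  | nil h => exact .nil (h.of_iso e.symm)
  | step F A hX f g h ht =>
    refine .step F' A hX (f ≫ e.hom) (e.inv ≫ g) h (isomorphic_distinguished _ ht _ ?_)
    exact Triangle.isoMk _ _ (Iso.refl _) e.symm (Iso.refl _)
      (by simp [Triangle.mk]) (by simp [Triangle.mk]) (by simp [Triangle.mk])

lemma catDelta_le_of_iso_biprod [HasBinaryBiproducts D] (t : ℝ) (G : D) {C E F : D}
    (hE : ¬ IsZero E) (e : F ≅ C ⊞ E) : catDelta t G E ≤ catDelta t G F := by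
  have hF : ¬ IsZero F := fun h => hE ((h.of_iso e.symm).of_mono biprod.inr)
  rw [catDelta, catDelta, if_neg hE, if_neg hF]
  refine sInf_le_sInf ?_
  rintro x ⟨ns, F', hns, hF', rfl⟩
  refine ⟨ns, F' ⊞ C, hns, hF'.of_iso ?_, rfl⟩
  exact biprod.mapIso e (Iso.refl F') ≪≫ biprod.associator C E F' ≪≫
    biprod.braiding C (E ⊞ F') ≪≫ biprod.associator E F' C

lemma nonempty_iterate_obj_biprod_iso {C : Type*} [Category C] [Preadditive C]
    [HasBinaryBiproducts C] (T : C ⥤ C) [T.Additive] (X : C) {E : C} (eE : T.obj E ≅ E)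
    (n : ℕ) :
    Nonempty ((T.obj)^[n] (X ⊞ E) ≅ (T.obj)^[n] X ⊞ E) := by
  have := preservesBinaryBiproducts_of_preservesBiproducts T
  induction n with
  | zero => exact ⟨Iso.refl _⟩
  | succ n ih =>
    obtain ⟨e⟩ := ih
    rw [Function.iterate_succ_apply', Function.iterate_succ_apply']
    exact ⟨T.mapIso e ≪≫ T.mapBiprod _ _ ≪≫ biprod.mapIso (Iso.refl _) eE⟩

lemma ENNReal.liminf_inv_mul_log_nonneg {a : ℕ → ℝ≥0∞} {δ : ℝ≥0∞} (hδ : 0 < δ)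
    (ha : ∀ n, δ ≤ a n) :
    (0 : EReal) ≤ liminf (fun n : ℕ => ((n : ℝ)⁻¹ : EReal) * ENNReal.log (a n)) atTop := by
  obtain ⟨c, -, hc⟩ := EReal.lt_iff_exists_real_btwn.1 (ENNReal.bot_lt_log_iff.2 hδ)
  have hlower (n : ℕ) : ((n : ℝ)⁻¹ * c : ℝ) ≤ ((n : ℝ)⁻¹ : EReal) * ENNReal.log (a n) := by
    rw [EReal.coe_mul]
    exact mul_le_mul_of_nonneg_left (hc.le.trans (ENNReal.log_monotone (ha n)))
      (EReal.coe_nonneg.2 (by positivity))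
  have hlim : Tendsto (fun n : ℕ => (((n : ℝ)⁻¹ * c : ℝ) : EReal)) atTop (nhds 0) :=
    EReal.tendsto_coe.2 (by simpa using tendsto_inv_atTop_nhds_zero_nat.mul_const c)
  exact hlim.liminf_eq.symm.le.trans (liminf_le_liminf (Eventually.of_forall hlower))

theorem twist_entropy_nonneg_general [HasBinaryBiproducts D]
    (T : D ⥤ D) [T.CommShift ℤ] [T.IsTriangulated]
    (G : D) (hG : IsSplitGenerator G)
    (E : D) (hE : ¬ IsZero E) (eE : T.obj E ≅ E)
    (t : ℝ) (hδ : 0 < catDelta t G E) :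
    IsSplitGenerator (G ⊞ E) ∧
    (0 : EReal) ≤ liminf (fun n : ℕ => ((n : ℝ)⁻¹ : EReal) *
        ENNReal.log (catDelta t G ((T.obj)^[n] (G ⊞ E)))) atTop := by
  refine ⟨hG.biprod E, ENNReal.liminf_inv_mul_log_nonneg hδ fun n => ?_⟩
  obtain ⟨e⟩ := nonempty_iterate_obj_biprod_iso T G eE n
  exact catDelta_le_of_iso_biprod t G hE e

/-- Theorem 1.7(2): if the twist fixes a nonzero object `E`, then `h_t(T_S) ≥ 0`. -/
theorem twist_entropy_nonneg [HasBinaryBiproducts D]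
    (T : D ⥤ D) [T.CommShift ℤ] [T.IsTriangulated] [T.IsEquivalence]
    (G : D) (hG : IsSplitGenerator G)
    (E : D) (hE : ¬ IsZero E) (eE : T.obj E ≅ E)
    (t : ℝ) (hδ : 0 < catDelta t G E) :
    IsSplitGenerator (G ⊞ E) ∧
    (0 : EReal) ≤ liminf (fun n : ℕ => ((n : ℝ)⁻¹ : EReal) *
        ENNReal.log (catDelta t G ((T.obj)^[n] (G ⊞ E)))) atTop :=
  twist_entropy_nonneg_general T G hG E hE eE t hδ
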